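/- Every element of GL_n(F) can be written uniquely in the form r·b with r ∈ R = ⋃_{w ∈ S_n} R_w and b ∈ B. -/

import Mathlib

open Matrix

variable (p : ℕ) [Fact p.Prime] (F : Type) [Field F] [Algebra ℚ_[p] F]
  [FiniteDimensional ℚ_[p] F] [Algebra ℤ_[p] F] [IsScalarTower ℤ_[p] ℚ_[p] F]

/-- The ring of integers `o_F` of the finite extension `F` of `ℚ_p`. -/
def oF : Set F := {x | x ∈ integralClosure ℤ_[p] F}

/-- The ideal `π_F o_F` of `o_F`, as a subset of `F`. -/
def piO (π : F) : Set F := {x | ∃ c ∈ oF p F, x = π * c}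

/-- The permutation matrix of `w`, with `w_{ij} = 1` iff `w(j) = i`. -/
def permMat (n : ℕ) (w : Equiv.Perm (Fin n)) : Matrix (Fin n) (Fin n) F :=
  fun i j => if w j = i then 1 else 0

/-- `R_w`: the set of matrices `(a_{ij})` with `a_{ij} = 1` if `w⁻¹(i) = j`,
`a_{ij} = 0` if `w⁻¹(i) < j`, `a_{ij} ∈ o_F` if `w⁻¹(i) > j` and `w(j) > i`, and
`a_{ij} ∈ π_F o_F` if `w⁻¹(i) > j` and `w(j) < i`. -/
def Rw (π : F) (n : ℕ) (w : Equiv.Perm (Fin n)) : Set (Matrix (Fin n) (Fin n) F) :=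
  {a | ∀ i j : Fin n,
    (w⁻¹ i = j → a i j = 1) ∧
    (w⁻¹ i < j → a i j = 0) ∧
    (j < w⁻¹ i → i < w j → a i j ∈ oF p F) ∧
    (j < w⁻¹ i → w j < i → a i j ∈ piO p F π)}

/-- invertible upper triangular matrix (an element of the Borel `B`). -/
def IsBorel {n : ℕ} (b : Matrix (Fin n) (Fin n) F) : Prop :=
  (∀ i j : Fin n, j < i → b i j = 0) ∧ (∀ i : Fin n, b i i ≠ 0)

/-!
Existence is Gaussian elimination on columns with a `π`-adic pivot rule: in the first column take,
among the entries of least valuation, the lowest one. Dividing the column by the pivot puts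
entries of `o_F` above it and of `π o_F` below it, which is exactly the first column of an element
of `R_w`; clearing the rest of the pivot row by upper triangular column operations leaves the Schur
complement of the pivot, an invertible matrix of size `n - 1`, to which one recurses.

For uniqueness, the first column of `r * b` is `b₀₀` times that of `r`. If two such columns had
their pivots in different rows, comparing the two rows would give `1 ∈ π o_F`, which fails because
`π⁻¹ ∉ o_F`. So the pivots, the first columns and the first rows of the two Borel factors agree,
and what remains after deleting the pivot row and the first column is an equation of the same
kind in size `n - 1`.
-/

namespace Equiv.Perm

variable {n : ℕ}

def consPerm (i0 : Fin (n + 1)) (v : Perm (Fin n)) : Perm (Fin (n + 1)) :=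
  i0.cycleRange.symm * decomposeFin.symm (0, v)

@[simp]
theorem consPerm_zero (i0 : Fin (n + 1)) (v : Perm (Fin n)) : consPerm i0 v 0 = i0 := by
  simp [consPerm]

@[simp]
theorem consPerm_succ (i0 : Fin (n + 1)) (v : Perm (Fin n)) (j : Fin n) :
    consPerm i0 v j.succ = i0.succAbove (v j) := by
  simp [consPerm]

@[simp]
theorem consPerm_inv_self (i0 : Fin (n + 1)) (v : Perm (Fin n)) : (consPerm i0 v)⁻¹ i0 = 0 := by
  rw [inv_eq_iff_eq, consPerm_zero]

@[simp]
theorem consPerm_inv_succAbove (i0 : Fin (n + 1)) (v : Perm (Fin n)) (k : Fin n) :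
    (consPerm i0 v)⁻¹ (i0.succAbove k) = (v⁻¹ k).succ := by
  rw [inv_eq_iff_eq, consPerm_succ]
  simp

theorem exists_eq_consPerm (w : Perm (Fin (n + 1))) : ∃ v, w = consPerm (w 0) v := by
  set σ := (w 0).cycleRange * w
  have hσ : decomposeFin.symm (0, (decomposeFin σ).2) = σ := by
    have h0 : (decomposeFin σ).1 = 0 := by
      have : σ 0 = 0 := by simp [σ]
      conv_rhs => rw [← this, ← decomposeFin.symm_apply_apply σ]
      exact (decomposeFin_symm_apply_zero _ _).symm
    rw [← h0, Prod.mk.eta, Equiv.symm_apply_apply]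
  refine ⟨(decomposeFin σ).2, ?_⟩
  rw [consPerm, hσ]
  ext i
  simp [σ]

end Equiv.Perm

namespace Matrix

variable {α : Type*} {n : ℕ}

/-- First column `c`, zeros in the rest of row `i0`, and `a` in the remaining rows and columns. -/
def insertPivot [Zero α] (i0 : Fin (n + 1)) (c : Fin (n + 1) → α)
    (a : Matrix (Fin n) (Fin n) α) : Matrix (Fin (n + 1)) (Fin (n + 1)) α :=
  of fun i => Fin.cons (c i) (Fin.insertNth (α := fun _ => Fin n → α) i0 0 (fun k => a k) i)

/-- The block matrix `!![d, ρ; 0, b]`. -/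
def upperCons [Zero α] (d : α) (ρ : Fin n → α) (b : Matrix (Fin n) (Fin n) α) :
    Matrix (Fin (n + 1)) (Fin (n + 1)) α :=
  of (Fin.cons (Fin.cons d ρ) fun i => Fin.cons 0 (b i))

section Zero

variable [Zero α] (i0 : Fin (n + 1)) (c : Fin (n + 1) → α) (a : Matrix (Fin n) (Fin n) α)
  (d : α) (ρ : Fin n → α) (b : Matrix (Fin n) (Fin n) α)

@[simp] theorem insertPivot_apply_zero (i : Fin (n + 1)) : insertPivot i0 c a i 0 = c i := rfl

@[simp] theorem insertPivot_apply_self_succ (j : Fin n) : insertPivot i0 c a i0 j.succ = 0 := by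
  simp [insertPivot]

@[simp] theorem insertPivot_apply_succAbove_succ (k j : Fin n) :
    insertPivot i0 c a (i0.succAbove k) j.succ = a k j := by
  simp [insertPivot]

@[simp] theorem upperCons_apply_zero_zero : upperCons d ρ b 0 0 = d := rfl
@[simp] theorem upperCons_apply_zero_succ (j : Fin n) : upperCons d ρ b 0 j.succ = ρ j := rfl
@[simp] theorem upperCons_apply_succ_zero (i : Fin n) : upperCons d ρ b i.succ 0 = 0 := rfl
@[simp] theorem upperCons_apply_succ_succ (i j : Fin n) :
    upperCons d ρ b i.succ j.succ = b i j := rfl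

theorem insertPivot_submatrix : (insertPivot i0 c a).submatrix i0.succAbove Fin.succ = a := by
  ext; simp

theorem upperCons_submatrix : (upperCons d ρ b).submatrix Fin.succ Fin.succ = b := rfl

end Zero

section Semiring

variable [Semiring α] (i0 : Fin (n + 1)) (c : Fin (n + 1) → α) (a : Matrix (Fin n) (Fin n) α)
  (d : α) (ρ : Fin n → α) (b : Matrix (Fin n) (Fin n) α)

@[simp] theorem insertPivot_mul_upperCons_apply_zero (i : Fin (n + 1)) :
    (insertPivot i0 c a * upperCons d ρ b) i 0 = c i * d := by
  simp [mul_apply, Fin.sum_univ_succ]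

@[simp] theorem insertPivot_mul_upperCons_apply_self_succ (j : Fin n) :
    (insertPivot i0 c a * upperCons d ρ b) i0 j.succ = c i0 * ρ j := by
  simp [mul_apply, Fin.sum_univ_succ]

@[simp] theorem insertPivot_mul_upperCons_apply_succAbove_succ (k j : Fin n) :
    (insertPivot i0 c a * upperCons d ρ b) (i0.succAbove k) j.succ =
      c (i0.succAbove k) * ρ j + (a * b) k j := by
  simp [mul_apply, Fin.sum_univ_succ]

end Semiring

section CommRing

variable [CommRing α]

theorem det_insertPivot (i0 : Fin (n + 1)) (c : Fin (n + 1) → α)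
    (a : Matrix (Fin n) (Fin n) α) : (insertPivot i0 c a).det = (-1) ^ (i0 : ℕ) * c i0 * a.det := by
  rw [det_succ_row _ i0, Fin.sum_univ_succ]
  simp [insertPivot_submatrix]

theorem det_upperCons (d : α) (ρ : Fin n → α) (b : Matrix (Fin n) (Fin n) α) :
    (upperCons d ρ b).det = d * b.det := by
  rw [det_succ_column_zero, Fin.sum_univ_succ]
  simp [upperCons_submatrix]

end CommRing

section Field

variable {K : Type*} [Field K]

def pivotSchurComplement (g : Matrix (Fin (n + 1)) (Fin (n + 1)) K) (i0 : Fin (n + 1)) :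
    Matrix (Fin n) (Fin n) K :=
  g.submatrix i0.succAbove Fin.succ -
    vecMulVec (fun k => g (i0.succAbove k) 0 / g i0 0) (fun j => g i0 j.succ)

theorem insertPivot_mul_upperCons_eq {g : Matrix (Fin (n + 1)) (Fin (n + 1)) K} {i0 : Fin (n + 1)}
    (hg : g i0 0 ≠ 0) {a b : Matrix (Fin n) (Fin n) K} (hab : a * b = pivotSchurComplement g i0) :
    insertPivot i0 (fun i => g i 0 / g i0 0) a * upperCons (g i0 0) (fun j => g i0 j.succ) b =
      g := by
  ext i j
  cases j using Fin.cases with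
  | zero => simp [hg]
  | succ j =>
    obtain rfl | ⟨k, rfl⟩ := Fin.eq_self_or_eq_succAbove i0 i
    · simp [hg]
    · simp [hab, pivotSchurComplement, vecMulVec_apply]

theorem det_eq_mul_det_pivotSchurComplement {g : Matrix (Fin (n + 1)) (Fin (n + 1)) K}
    {i0 : Fin (n + 1)} (hg : g i0 0 ≠ 0) :
    g.det = (-1) ^ (i0 : ℕ) * g i0 0 * (pivotSchurComplement g i0).det := by
  conv_lhs => rw [← insertPivot_mul_upperCons_eq hg (mul_one _)]
  rw [det_mul, det_insertPivot, det_upperCons, det_one, div_self hg]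
  ring

end Field

end Matrix

section Borel

variable {K : Type} [Field K] {n : ℕ}

theorem IsBorel.upperCons {d : K} {ρ : Fin n → K} {b : Matrix (Fin n) (Fin n) K} (hd : d ≠ 0)
    (hb : IsBorel K b) : IsBorel K (upperCons d ρ b) := by
  refine ⟨fun i j hji => ?_, fun i => ?_⟩
  · cases i using Fin.cases with
    | zero => exact absurd hji (Fin.not_lt_zero j)
    | succ i =>
      cases j using Fin.cases with
      | zero => rfl
      | succ j => exact hb.1 i j (Fin.succ_lt_succ_iff.mp hji)
  · cases i using Fin.cases with
    | zero => exact hd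
    | succ i => exact hb.2 i

theorem IsBorel.exists_eq_upperCons {b : Matrix (Fin (n + 1)) (Fin (n + 1)) K} (hb : IsBorel K b) :
    ∃ d ρ b', b = Matrix.upperCons d ρ b' ∧ d ≠ 0 ∧ IsBorel K b' := by
  refine ⟨b 0 0, fun j => b 0 j.succ, b.submatrix Fin.succ Fin.succ, ?_, hb.2 0,
    fun i j hji => hb.1 _ _ (Fin.succ_lt_succ_iff.mpr hji), fun i => hb.2 _⟩
  ext i j
  cases i using Fin.cases with
  | zero => cases j using Fin.cases <;> rfl
  | succ i =>
    cases j using Fin.cases with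
    | zero => exact hb.1 _ _ (Fin.succ_pos i)
    | succ j => rfl

end Borel

open Equiv.Perm

section IntegerRing

omit [Algebra ℚ_[p] F] [FiniteDimensional ℚ_[p] F] [IsScalarTower ℤ_[p] ℚ_[p] F]

def IsPivotColumn (π : F) {m : ℕ} (c : Fin m → F) (i0 : Fin m) : Prop :=
  c i0 = 1 ∧ (∀ i, i < i0 → c i ∈ oF p F) ∧ ∀ i, i0 < i → c i ∈ piO p F π

variable {p F} {π : F}

theorem zero_mem_oF : (0 : F) ∈ oF p F := (integralClosure ℤ_[p] F).zero_mem

theorem mul_mem_oF {x y : F} (hx : x ∈ oF p F) (hy : y ∈ oF p F) : x * y ∈ oF p F :=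
  (integralClosure ℤ_[p] F).mul_mem hx hy

theorem pow_mem_oF {x : F} (hx : x ∈ oF p F) (k : ℕ) : x ^ k ∈ oF p F :=
  (integralClosure ℤ_[p] F).pow_mem hx k

theorem zero_mem_piO : (0 : F) ∈ piO p F π := ⟨0, zero_mem_oF, (mul_zero π).symm⟩

theorem mul_mem_piO {x y : F} (hx : x ∈ oF p F) (hy : y ∈ piO p F π) :
    x * y ∈ piO p F π := by
  obtain ⟨c, hc, rfl⟩ := hy
  exact ⟨x * c, mul_mem_oF hx hc, by ring⟩

theorem zpow_mem_oF (hπ : π ∈ oF p F) {k : ℤ} (hk : 0 ≤ k) : π ^ k ∈ oF p F := by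
  lift k to ℕ using hk
  rw [zpow_natCast]
  exact pow_mem_oF hπ k

theorem zpow_mem_piO (hπ : π ∈ oF p F) {k : ℤ} (hk : 0 < k) : π ^ k ∈ piO p F π := by
  obtain ⟨k, rfl⟩ : ∃ k' : ℕ, k = k' + 1 := ⟨(k - 1).toNat, by omega⟩
  exact ⟨π ^ k, pow_mem_oF hπ k, by norm_cast; exact pow_succ' π k⟩

theorem zpow_mem_oF_of_inv_mem (hπ : π ∈ oF p F) (hπ' : π⁻¹ ∈ oF p F) (k : ℤ) :
    π ^ k ∈ oF p F := by
  cases k with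
  | ofNat k => rw [Int.ofNat_eq_natCast, zpow_natCast]; exact pow_mem_oF hπ k
  | negSucc k => rw [zpow_negSucc, ← inv_pow]; exact pow_mem_oF hπ' _

variable {n : ℕ}

theorem insertPivot_mem_Rw_iff {i0 : Fin (n + 1)} {c : Fin (n + 1) → F}
    {a : Matrix (Fin n) (Fin n) F} {v : Equiv.Perm (Fin n)} :
    insertPivot i0 c a ∈ Rw p F π (n + 1) (consPerm i0 v) ↔
      IsPivotColumn p F π c i0 ∧ a ∈ Rw p F π n v := by
  simp only [Rw, Set.mem_ofPred_eq]
  rw [Fin.forall_iff_succAbove i0]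
  simp only [Fin.forall_fin_succ]
  rw [IsPivotColumn, Fin.forall_iff_succAbove i0, Fin.forall_iff_succAbove i0]
  simp [Fin.succAbove_lt_succAbove_iff, forall_and, and_assoc, eq_comm (a := (0 : Fin (n + 1)))]

theorem eq_insertPivot_of_mem_Rw {w : Equiv.Perm (Fin (n + 1))}
    {r : Matrix (Fin (n + 1)) (Fin (n + 1)) F} (hr : r ∈ Rw p F π (n + 1) w) :
    r = insertPivot (w 0) (fun i => r i 0) (r.submatrix (w 0).succAbove Fin.succ) := by
  ext i j
  cases j using Fin.cases with
  | zero => rfl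
  | succ j =>
    obtain rfl | ⟨k, rfl⟩ := Fin.eq_self_or_eq_succAbove (w 0) i
    · simpa using (hr (w 0) j.succ).2.1 (by simp [Fin.succ_pos])
    · simp

theorem exists_eq_insertPivot_of_mem_Rw {w : Equiv.Perm (Fin (n + 1))}
    {r : Matrix (Fin (n + 1)) (Fin (n + 1)) F} (hr : r ∈ Rw p F π (n + 1) w) :
    ∃ i0 c a v, w = consPerm i0 v ∧ r = insertPivot i0 c a ∧
      IsPivotColumn p F π c i0 ∧ a ∈ Rw p F π n v := by
  obtain ⟨v, hv⟩ := exists_eq_consPerm w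
  have hr' := eq_insertPivot_of_mem_Rw hr
  refine ⟨w 0, _, _, v, hv, hr', insertPivot_mem_Rw_iff.mp ?_⟩
  rwa [← hr', ← hv]

end IntegerRing

section Uniformizer

omit [FiniteDimensional ℚ_[p] F]

variable {p F}

theorem inv_natCast_notMem_oF : ((p : F))⁻¹ ∉ oF p F := by
  intro h
  have hint : IsIntegral ℤ_[p] ((p : ℚ_[p]))⁻¹ := by
    rw [← isIntegral_algebraMap_iff (algebraMap ℚ_[p] F).injective, map_inv₀, map_natCast]
    exact h
  obtain ⟨z, hz⟩ := IsIntegrallyClosed.isIntegral_iff.mp hint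
  have hz1 : ‖(z : ℚ_[p])‖ ≤ 1 := z.norm_le_one
  rw [show algebraMap ℤ_[p] ℚ_[p] z = z from rfl] at hz
  rw [hz, norm_inv, Padic.norm_p, inv_inv] at hz1
  exact hz1.not_gt (by exact_mod_cast (Fact.out : p.Prime).one_lt)

variable {π : F} (hπ : π ∈ oF p F)
  (hunif : ∀ x : F, x ≠ 0 → ∃ (m : ℤ) (u : F), u ∈ oF p F ∧ u⁻¹ ∈ oF p F ∧ x = u * π ^ m)

include hπ hunif

/-- If `π⁻¹` were integral, every `π ^ k` would be, and writing `p = u * π ^ m` so would `p⁻¹`. -/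
theorem inv_notMem_oF : π⁻¹ ∉ oF p F := by
  intro hπ'
  have : CharZero F := charZero_of_injective_algebraMap (algebraMap ℚ_[p] F).injective
  obtain ⟨m, u, -, hu', hpu⟩ :=
    hunif p (Nat.cast_ne_zero.mpr (Fact.out : p.Prime).ne_zero)
  apply inv_natCast_notMem_oF (p := p) (F := F)
  rw [hpu, mul_inv, ← _root_.zpow_neg]
  exact mul_mem_oF hu' (zpow_mem_oF_of_inv_mem hπ hπ' _)

theorem uniformizer_ne_zero : π ≠ 0 := by
  rintro rfl
  exact inv_notMem_oF hπ hunif (by simpa using zero_mem_oF)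

theorem one_notMem_piO : (1 : F) ∉ piO p F π := by
  rintro ⟨c, hc, h⟩
  exact inv_notMem_oF hπ hunif (eq_inv_of_mul_eq_one_right h.symm ▸ hc)

/-- The pivot is the last nonzero entry of least valuation `v`, where `x = u x * π ^ v x`. -/
theorem exists_isPivotColumn {m : ℕ} (x : Fin m → F) (hx : x ≠ 0) :
    ∃ i0, x i0 ≠ 0 ∧ IsPivotColumn p F π (fun i => x i / x i0) i0 := by
  classical
  have hπ0 := uniformizer_ne_zero hπ hunif
  choose! v u hu hu' hxu using hunif
  have hdiv : ∀ {y z : F}, y ≠ 0 → z ≠ 0 → y / z = u y * (u z)⁻¹ * π ^ (v y - v z) := by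
    intro y z hy hz
    conv_lhs => rw [hxu y hy, hxu z hz]
    rw [zpow_sub₀ hπ0]
    ring
  obtain ⟨i0, hi0, hmax⟩ := Finset.exists_max_image (Finset.univ.filter fun i => x i ≠ 0)
    (fun i => toLex (-v (x i), i))
    (by obtain ⟨i, hi⟩ := Function.ne_iff.mp hx; exact ⟨i, by simpa using hi⟩)
  have hi0 : x i0 ≠ 0 := by simpa using hi0
  have hv : ∀ i, x i ≠ 0 → v (x i0) < v (x i) ∨ v (x i0) = v (x i) ∧ i ≤ i0 := fun i hi => by
    have := hmax i (by simpa using hi)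
    rw [Prod.Lex.le_iff] at this
    simp at this
    omega
  refine ⟨i0, hi0, div_self hi0, fun i hi => ?_, fun i hi => ?_⟩ <;> dsimp only
  · by_cases hxi : x i = 0
    · simp [hxi, zero_mem_oF]
    · rw [hdiv hxi hi0]
      have : v (x i0) ≤ v (x i) := by rcases hv i hxi with h | h <;> omega
      exact mul_mem_oF (mul_mem_oF (hu _ hxi) (hu' _ hi0)) (zpow_mem_oF hπ (by omega))
  · by_cases hxi : x i = 0
    · simp [hxi, zero_mem_piO]
    · rw [hdiv hxi hi0]
      have : v (x i0) < v (x i) := (hv i hxi).resolve_right fun h => not_le.mpr hi h.2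
      exact mul_mem_piO (mul_mem_oF (hu _ hxi) (hu' _ hi0)) (zpow_mem_piO hπ (by omega))

theorem not_lt_of_isPivotColumn {m : ℕ} {c c' : Fin m → F} {i0 i0' : Fin m} {d d' : F}
    (hc : IsPivotColumn p F π c i0) (hc' : IsPivotColumn p F π c' i0') (hd' : d' ≠ 0)
    (h : ∀ i, c i * d = c' i * d') : ¬i0 < i0' := by
  intro hlt
  apply one_notMem_piO hπ hunif
  have h1 : d = c' i0 * d' := by simpa [hc.1] using h i0
  have h2 : c i0' * d = d' := by simpa [hc'.1] using h i0'
  have : c' i0 * c i0' = 1 := by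
    apply mul_right_cancel₀ hd'
    nth_rewrite 2 [← h2]
    rw [one_mul, h1]
    ring
  rw [← this]
  exact mul_mem_piO (hc'.2.1 i0 hlt) (hc.2.2 i0' hlt)

theorem eq_of_isPivotColumn {m : ℕ} {c c' : Fin m → F} {i0 i0' : Fin m} {d d' : F}
    (hc : IsPivotColumn p F π c i0) (hc' : IsPivotColumn p F π c' i0') (hd : d ≠ 0)
    (hd' : d' ≠ 0) (h : ∀ i, c i * d = c' i * d') : i0 = i0' :=
  le_antisymm (not_lt.mp (not_lt_of_isPivotColumn hπ hunif hc' hc hd fun i => (h i).symm))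
    (not_lt.mp (not_lt_of_isPivotColumn hπ hunif hc hc' hd' h))

theorem eq_of_insertPivot_mul_upperCons_eq {n : ℕ} {i0 i0' : Fin (n + 1)}
    {c c' : Fin (n + 1) → F} {a a' b b' : Matrix (Fin n) (Fin n) F} {d d' : F} {ρ ρ' : Fin n → F}
    (hc : IsPivotColumn p F π c i0) (hc' : IsPivotColumn p F π c' i0') (hd : d ≠ 0)
    (hd' : d' ≠ 0)
    (h : insertPivot i0 c a * upperCons d ρ b = insertPivot i0' c' a' * upperCons d' ρ' b') :
    i0 = i0' ∧ c = c' ∧ d = d' ∧ ρ = ρ' ∧ a * b = a' * b' := by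
  have hcol : ∀ i, c i * d = c' i * d' := fun i => by
    simpa using congrFun (congrFun h i) 0
  obtain rfl := eq_of_isPivotColumn hπ hunif hc hc' hd hd' hcol
  obtain rfl : d = d' := by simpa [hc.1, hc'.1] using hcol i0
  obtain rfl : c = c' := funext fun i => mul_right_cancel₀ hd (hcol i)
  obtain rfl : ρ = ρ' := funext fun j => by simpa [hc.1] using congrFun (congrFun h i0) j.succ
  refine ⟨rfl, rfl, rfl, rfl, ?_⟩
  ext k j
  simpa using congrFun (congrFun h (i0.succAbove k)) j.succ

theorem exists_mem_Rw_mul_isBorel {n : ℕ} (g : Matrix (Fin n) (Fin n) F) (hg : g.det ≠ 0) :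
    ∃ w r b, r ∈ Rw p F π n w ∧ IsBorel F b ∧ g = r * b := by
  induction n with
  | zero =>
    exact ⟨1, 1, 1, fun i => i.elim0, ⟨fun i => i.elim0, fun i => i.elim0⟩, Subsingleton.elim _ _⟩
  | succ n ih =>
    have hcol : (fun i => g i 0) ≠ 0 := fun h =>
      hg (det_eq_zero_of_column_eq_zero 0 (congrFun h))
    obtain ⟨i0, hg0, hc⟩ := exists_isPivotColumn hπ hunif _ hcol
    have hS : (pivotSchurComplement g i0).det ≠ 0 := by
      rw [det_eq_mul_det_pivotSchurComplement hg0] at hg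
      exact right_ne_zero_of_mul hg
    obtain ⟨v, a, b, ha, hb, hab⟩ := ih _ hS
    exact ⟨consPerm i0 v, _, _, insertPivot_mem_Rw_iff.mpr ⟨hc, ha⟩, hb.upperCons hg0,
      (insertPivot_mul_upperCons_eq hg0 hab.symm).symm⟩

theorem eq_of_mem_Rw_mul_isBorel {n : ℕ} {w w' : Equiv.Perm (Fin n)}
    {r r' b b' : Matrix (Fin n) (Fin n) F} (hr : r ∈ Rw p F π n w) (hr' : r' ∈ Rw p F π n w')
    (hb : IsBorel F b) (hb' : IsBorel F b') (h : r * b = r' * b') : r = r' ∧ b = b' := by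
  induction n with
  | zero => exact ⟨Subsingleton.elim _ _, Subsingleton.elim _ _⟩
  | succ n ih =>
    obtain ⟨i0, c, a, v, rfl, rfl, hc, ha⟩ := exists_eq_insertPivot_of_mem_Rw hr
    obtain ⟨i0', c', a', v', rfl, rfl, hc', ha'⟩ := exists_eq_insertPivot_of_mem_Rw hr'
    obtain ⟨d, ρ, bt, rfl, hd, hbt⟩ := hb.exists_eq_upperCons
    obtain ⟨d', ρ', bt', rfl, hd', hbt'⟩ := hb'.exists_eq_upperCons
    obtain ⟨rfl, rfl, rfl, rfl, hab⟩ :=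
      eq_of_insertPivot_mul_upperCons_eq hπ hunif hc hc' hd hd' h
    obtain ⟨rfl, rfl⟩ := ih ha ha' hbt hbt' hab
    exact ⟨rfl, rfl⟩

end Uniformizer

/-- every element of `GL_n(F)` can be written uniquely in the form
`r · b` with `r ∈ R = ⋃_w R_w` and `b ∈ B`. -/
theorem stmt10 (n : ℕ) (π : F) (hπ : π ∈ oF p F)
    (hunif : ∀ x : F, x ≠ 0 →
      ∃ (m : ℤ) (u : F), u ∈ oF p F ∧ u⁻¹ ∈ oF p F ∧ x = u * π ^ m)
    (g : GL (Fin n) F) :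
    ∃ (w : Equiv.Perm (Fin n)) (r b : Matrix (Fin n) (Fin n) F),
      r ∈ Rw p F π n w ∧ IsBorel F b ∧ (↑g : Matrix (Fin n) (Fin n) F) = r * b ∧
      ∀ (w' : Equiv.Perm (Fin n)) (r' b' : Matrix (Fin n) (Fin n) F),
        r' ∈ Rw p F π n w' → IsBorel F b' →
        (↑g : Matrix (Fin n) (Fin n) F) = r' * b' → r' = r ∧ b' = b := by
  obtain ⟨w, r, b, hr, hb, hg⟩ :=
    exists_mem_Rw_mul_isBorel hπ hunif _ (GeneralLinearGroup.det_ne_zero g)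
  exact ⟨w, r, b, hr, hb, hg, fun w' r' b' hr' hb' hg' =>
    eq_of_mem_Rw_mul_isBorel hπ hunif hr' hr hb' hb (hg'.symm.trans hg)⟩
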